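/- Let U ⊆ TM be an open set disjoint from the zero section. A 1-form τ on U belongs to the class of time (τ ≡ α/α̇ mod the contact system at each point where α̇ ≠ 0, for every 1-form α on M) if and only if τ is horizontal and ⟨τ, \dot d⟩ = 1, i.e. τ_{v_a}(v_a) = 1 for all v_a ∈ U. Consequently ⟨τ, D⟩ = 1 for every second order differential equation D. -/

import Mathlib

/-! Since `v ≠ 0`, some 1-form `α` on `M` has `α̇(v) ≠ 0` (a covector not vanishing on `v`).
For any such `α`, the congruence `τ ≡ α/α̇ mod Ω` at `v` says exactly that `τ_v = φ ∘ dπ` with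
`φ(v) = 1`: `φ` and `α/α̇` differ by a covector vanishing on `v`. Hence the congruence for one
such `α` gives it for all of them, and pairing with a second order equation `D`, for which
`dπ (D v) = v`, gives `⟨τ, D⟩ = φ(v) = 1`. -/

open Bundle Manifold

noncomputable section

variable {E : Type*} [NormedAddCommGroup E] [NormedSpace ℝ E]
  {H : Type*} [TopologicalSpace H] (I : ModelWithCorners ℝ E H)
  (M : Type*) [TopologicalSpace M] [ChartedSpace H M] [IsManifold I (⊤ : ℕ∞) M]

/-- Vector fields on the tangent bundle `TM`. -/
def VFTB := ∀ v : TangentBundle I M, TangentSpace I.tangent v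

/-- Pointwise 1-forms on `TM`. -/
def OneFormTB := ∀ v : TangentBundle I M, TangentSpace I.tangent v →L[ℝ] ℝ

/-- Pointwise 2-forms on `TM`. -/
def TwoFormTB :=
  ∀ v : TangentBundle I M, TangentSpace I.tangent v →L[ℝ] TangentSpace I.tangent v →L[ℝ] ℝ

/-- Pseudo-Riemannian metrics on `M`, pointwise. -/
def Metric2 := ∀ a : M, TangentSpace I a →L[ℝ] TangentSpace I a →L[ℝ] ℝ

/-- 1-forms on `M`. -/
def OneFormM := ∀ a : M, TangentSpace I a →L[ℝ] ℝ

/-- Vector fields on `M`. -/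
def VFM := ∀ a : M, TangentSpace I a

variable {I M}

/-- The differential of the projection `π : TM → M` at `v`. -/
def dproj (v : TangentBundle I M) : TangentSpace I.tangent v →L[ℝ] TangentSpace I v.proj :=
  mfderiv I.tangent I (Bundle.TotalSpace.proj : TangentBundle I M → M) v

/-- Second order differential equation: `dπ (D v) = v`. -/
def IsSecondOrder (D : VFTB I M) : Prop := ∀ v : TangentBundle I M, dproj v (D v) = v.snd

/-- Vertical tangent vectors to `TM`. -/
def IsVerticalAt (v : TangentBundle I M) (X : TangentSpace I.tangent v) : Prop := dproj v X = 0

/-- A 1-form on `TM` is horizontal at `v` when it is the pull-back of a 1-form on `M`. -/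
def IsHorizontalAt (ω : OneFormTB I M) (v : TangentBundle I M) : Prop :=
  ∃ φ : TangentSpace I v.proj →L[ℝ] ℝ, ω v = φ.comp (dproj v)

/-- Vertical lift of `w ∈ T_{π v}M` to a tangent vector of `TM` at `v`. -/
def vlift (v : TangentBundle I M) (w : TangentSpace I v.proj) : TangentSpace I.tangent v :=
  mfderiv 𝓘(ℝ, ℝ) I.tangent
    (fun t : ℝ => (⟨v.proj, v.snd + t • w⟩ : TangentBundle I M)) 0 (1 : ℝ)

/-- Smoothness of a vector field on `TM`, viewed as a section of `T(TM)`. -/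
def SmoothVF (X : VFTB I M) : Prop :=
  ContMDiff I.tangent I.tangent.tangent (⊤ : ℕ∞)
    (fun v : TangentBundle I M => (⟨v, X v⟩ : TangentBundle I.tangent (TangentBundle I M)))

/-- The differential of a function on `TM` at a point. -/
def dfn (f : TangentBundle I M → ℝ) (v : TangentBundle I M) :
    TangentSpace I.tangent v →L[ℝ] ℝ :=
  mfderiv I.tangent 𝓘(ℝ, ℝ) f v

/-- The function `ḟ` on `TM` associated to `f : M → ℝ`. -/
def fdot (f : M → ℝ) : TangentBundle I M → ℝ :=
  fun v => mfderiv I 𝓘(ℝ, ℝ) f v.proj v.snd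

/-- The function `α̇` on `TM` associated to a 1-form `α` on `M`. -/
def adot (α : OneFormM I M) : TangentBundle I M → ℝ := fun v => α v.proj v.snd

/-- The kinetic energy of a metric. -/
def kinT (g : Metric2 I M) : TangentBundle I M → ℝ :=
  fun v => (1 / 2 : ℝ) * g v.proj v.snd v.snd

/-- `θ` is the Liouville form of the metric `g`: `θ_{v} = i_v T₂` pulled back to `TM`. -/
def IsLiouvilleForm (g : Metric2 I M) (θ : OneFormTB I M) : Prop :=
  ∀ v : TangentBundle I M, θ v = (g v.proj v.snd).comp (dproj v)

/-- `lie` is the Lie bracket of vector fields on `TM`, characterized on smooth functions. -/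
def IsLieBracket (lie : VFTB I M → VFTB I M → VFTB I M) : Prop :=
  ∀ X Y : VFTB I M, SmoothVF X → SmoothVF Y → ∀ f : TangentBundle I M → ℝ,
    ContMDiff I.tangent 𝓘(ℝ, ℝ) (⊤ : ℕ∞) f → ∀ v,
      dfn f v (lie X Y v) =
        dfn (fun w => dfn f w (Y w)) v (X v) - dfn (fun w => dfn f w (X w)) v (Y v)

/-- `ω₂` is the exterior derivative of the 1-form `θ` on `TM` (invariant formula). -/
def IsExtDerivOf (lie : VFTB I M → VFTB I M → VFTB I M) (θ : OneFormTB I M)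
    (ω₂ : TwoFormTB I M) : Prop :=
  ∀ X Y : VFTB I M, SmoothVF X → SmoothVF Y → ∀ v,
    ω₂ v (X v) (Y v) =
      dfn (fun w => θ w (Y w)) v (X v) - dfn (fun w => θ w (X w)) v (Y v)
      - θ v (lie X Y v)

/-- A pointwise 1-form at `v` belongs to the contact system: it is horizontal and kills `v`. -/
def InContactAt (v : TangentBundle I M) (ω : TangentSpace I.tangent v →L[ℝ] ℝ) : Prop :=
  ∃ φ : TangentSpace I v.proj →L[ℝ] ℝ, φ v.snd = 0 ∧ ω = φ.comp (dproj v)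

/-- A vector field `δ` on `TM` projects to the vector field `vb` on `M`. -/
def Projects (δ : VFTB I M) (vb : VFM I M) : Prop :=
  ∀ v : TangentBundle I M, dproj v (δ v) = vb v.proj

/-- `δ` is the prolongation of the vector field `vb` to `TM`:
it projects to `vb` (so `δ (f∘π) = (vb f)∘π`) and satisfies Euler's commutation formula
`δ ∘ \dot d = \dot d ∘ δ` on smooth functions of `M`. -/
def IsProlongation (vb : VFM I M) (δ : VFTB I M) : Prop :=
  (∀ f : M → ℝ, ContMDiff I 𝓘(ℝ, ℝ) (⊤ : ℕ∞) f → ∀ v : TangentBundle I M,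
      dfn (fun w : TangentBundle I M => f w.proj) v (δ v)
        = mfderiv I 𝓘(ℝ, ℝ) f v.proj (vb v.proj)) ∧
  (∀ f : M → ℝ, ContMDiff I 𝓘(ℝ, ℝ) (⊤ : ℕ∞) f → ∀ v : TangentBundle I M,
      dfn (fdot f) v (δ v) = fdot (fun a => mfderiv I 𝓘(ℝ, ℝ) f a (vb a)) v)

/-- A time constraint for `M`: a connected closed hypersurface of `TM`, missing the zero
section, projecting (regularly) onto `M`, locally cut out by equations `ḟ = 1` with
`f` a smooth function on `M` (the local exact representatives of the class of time). -/
def IsTimeConstraint (U : Set (TangentBundle I M)) : Prop :=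
  IsClosed U ∧ IsConnected U ∧ (∀ v ∈ U, v.snd ≠ 0) ∧
  (∀ a : M, ∃ v ∈ U, (Bundle.TotalSpace.proj : TangentBundle I M → M) v = a) ∧
  (∀ v ∈ U, ∃ (W : Set (TangentBundle I M)) (f : M → ℝ), IsOpen W ∧ v ∈ W ∧
      ContMDiff I 𝓘(ℝ, ℝ) (⊤ : ℕ∞) f ∧ ∀ w ∈ W, (w ∈ U ↔ fdot f w = 1))

/-- A 1-form on `M` is closed iff it is locally exact. -/
def IsClosedOneForm (τ : OneFormM I M) : Prop :=
  ∀ a : M, ∃ s ∈ nhds a, ∃ f : M → ℝ, ContMDiff I 𝓘(ℝ, ℝ) (⊤ : ℕ∞) f ∧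
    ∀ b ∈ s, τ b = mfderiv I 𝓘(ℝ, ℝ) f b

/-- The class of time at `v`: `τ ≡ α/α̇ mod Ω` whenever `α̇(v) ≠ 0`. -/
def InClassOfTimeAt (τ : OneFormTB I M) (v : TangentBundle I M) : Prop :=
  ∀ α : OneFormM I M, adot α v ≠ 0 →
    InContactAt v (τ v - (adot α v)⁻¹ • (α v.proj).comp (dproj v))

theorem inContactAt_sub_inv_smul_comp_iff {v : TangentBundle I M}
    (ω : TangentSpace I.tangent v →L[ℝ] ℝ) {ψ : TangentSpace I v.proj →L[ℝ] ℝ}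
    (hψ : ψ v.snd ≠ 0) :
    InContactAt v (ω - (ψ v.snd)⁻¹ • ψ.comp (dproj v)) ↔
      ∃ φ : TangentSpace I v.proj →L[ℝ] ℝ, φ v.snd = 1 ∧ ω = φ.comp (dproj v) := by
  constructor
  · rintro ⟨φ₀, hφ₀, hω⟩
    refine ⟨φ₀ + (ψ v.snd)⁻¹ • ψ, by simp [hφ₀, hψ], ?_⟩
    rw [ContinuousLinearMap.add_comp, ContinuousLinearMap.smul_comp, ← hω, sub_add_cancel]
  · rintro ⟨φ, hφ, rfl⟩
    refine ⟨φ - (ψ v.snd)⁻¹ • ψ, by simp [hφ, hψ], ?_⟩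
    rw [ContinuousLinearMap.sub_comp, ContinuousLinearMap.smul_comp]

theorem inClassOfTimeAt_iff {τ : OneFormTB I M} {v : TangentBundle I M} (hv : v.snd ≠ 0) :
    InClassOfTimeAt τ v ↔
      ∃ φ : TangentSpace I v.proj →L[ℝ] ℝ, φ v.snd = 1 ∧ τ v = φ.comp (dproj v) := by
  obtain ⟨g, hg⟩ : ∃ g : StrongDual ℝ E, g v.snd ≠ 0 := SeparatingDual.exists_ne_zero hv
  exact ⟨fun h => (inContactAt_sub_inv_smul_comp_iff (τ v) hg).1 (h (fun _ => g) hg),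
    fun h α hα => (inContactAt_sub_inv_smul_comp_iff (τ v) (ψ := α v.proj) hα).2 h⟩

theorem apply_of_isSecondOrder {τ : OneFormTB I M} {v : TangentBundle I M}
    {φ : TangentSpace I v.proj →L[ℝ] ℝ} (hτ : τ v = φ.comp (dproj v)) {D : VFTB I M}
    (hD : IsSecondOrder D) : τ v (D v) = φ v.snd := by
  rw [hτ, ContinuousLinearMap.comp_apply, hD v]

theorem class_of_time_characterization_general (U : Set (TangentBundle I M))
    (hzero : ∀ v ∈ U, v.snd ≠ 0) (τ : OneFormTB I M) :
    ((∀ v ∈ U, ∀ α : OneFormM I M, adot α v ≠ 0 →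
        InContactAt v (τ v - (adot α v)⁻¹ • (α v.proj).comp (dproj v))) ↔
      (∀ v ∈ U, ∃ φ : TangentSpace I v.proj →L[ℝ] ℝ,
        φ v.snd = 1 ∧ τ v = φ.comp (dproj v))) ∧
    ((∀ v ∈ U, ∀ α : OneFormM I M, adot α v ≠ 0 →
        InContactAt v (τ v - (adot α v)⁻¹ • (α v.proj).comp (dproj v))) →
      ∀ D : VFTB I M, IsSecondOrder D → ∀ v ∈ U, τ v (D v) = 1) := by
  have hclass : ∀ v ∈ U, InClassOfTimeAt τ v ↔
      ∃ φ : TangentSpace I v.proj →L[ℝ] ℝ, φ v.snd = 1 ∧ τ v = φ.comp (dproj v) :=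
    fun v hv => inClassOfTimeAt_iff (hzero v hv)
  refine ⟨forall₂_congr hclass, fun h D hD v hv => ?_⟩
  obtain ⟨φ, hφ, hτ⟩ := (hclass v hv).1 (h v hv)
  rw [apply_of_isSecondOrder hτ hD, hφ]

/-- on an open set `U ⊆ TM` missing the zero section, a 1-form `τ`
belongs to the class of time (`τ ≡ α/α̇ mod Ω` at each point, for every 1-form `α` on
`M` with `α̇ ≠ 0` there) iff `τ` is horizontal and `⟨τ, \dot d⟩ = 1`; consequently
`⟨τ, D⟩ = 1` for every second order differential equation `D`. -/
theorem class_of_time_characterization (U : Set (TangentBundle I M)) (hUopen : IsOpen U)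
    (hzero : ∀ v ∈ U, v.snd ≠ 0) (τ : OneFormTB I M) :
    ((∀ v ∈ U, ∀ α : OneFormM I M, adot α v ≠ 0 →
        InContactAt v (τ v - (adot α v)⁻¹ • (α v.proj).comp (dproj v))) ↔
      (∀ v ∈ U, ∃ φ : TangentSpace I v.proj →L[ℝ] ℝ,
        φ v.snd = 1 ∧ τ v = φ.comp (dproj v))) ∧
    ((∀ v ∈ U, ∀ α : OneFormM I M, adot α v ≠ 0 →
        InContactAt v (τ v - (adot α v)⁻¹ • (α v.proj).comp (dproj v))) →
      ∀ D : VFTB I M, IsSecondOrder D → ∀ v ∈ U, τ v (D v) = 1) :=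
  class_of_time_characterization_general U hzero τ
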